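/- The union of a strictly increasing (under end-extension) sequence of closed bounded sets of ordinals avoiding regular cardinals, of limit length η, together with the supremum σ of their suprema, is again a closed set avoiding regular cardinals, provided σ has cofinality cf(η) < σ (so σ is singular). -/

import Mathlib

/-- An ordinal is a regular cardinal (as an ordinal). -/
def RegularOrd (α : Ordinal) : Prop := ∃ κ : Cardinal, κ.IsRegular ∧ κ.ord = α

/-- A set of ordinals is closed if it contains each of its nonzero limit points lying
below its supremum. -/
def IsClosedSet (c : Set Ordinal) : Prop :=
  ∀ α : Ordinal, α ≠ 0 → α < sSup c →
    (∀ β < α, ∃ γ ∈ c, β < γ ∧ γ < α) → α ∈ c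

/-- `c` end-extends `d`: `c ⊇ d` and every new element of `c` lies above all of `d`. -/
def EndExtends (c d : Set Ordinal) : Prop :=
  d ⊆ c ∧ ∀ α ∈ c, α ∉ d → ∀ β ∈ d, β < α

/-- **The union of an end-extension chain, closed up with its supremum.** Let
`⟨s i⟩_{i < η}` be a strictly increasing (under end-extension) sequence, of limit length
`η`, of closed bounded sets of ordinals avoiding regular cardinals, and let `σ` be the
supremum of their suprema.  Provided `σ` has cofinality `cf(η) < σ` (so `σ` is
singular), the union of the sets together with `σ` is again a closed set avoiding
regular cardinals. -/
theorem union_chain_with_sup_closed_avoiding (η : Ordinal) (hη : Order.IsSuccLimit η)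
    (s : ∀ i : Ordinal, i < η → Set Ordinal)
    (hclosed : ∀ i (hi : i < η), IsClosedSet (s i hi))
    (hbdd : ∀ i (hi : i < η), BddAbove (s i hi))
    (havoid : ∀ i (hi : i < η), ∀ α ∈ s i hi, ¬ RegularOrd α)
    (hchain : ∀ i j (hi : i < η) (hj : j < η), i ≤ j → EndExtends (s j hj) (s i hi))
    (hstrict : ∀ i j (hi : i < η) (hj : j < η), i < j → sSup (s i hi) < sSup (s j hj))
    (σ : Ordinal) (hσ : σ = sSup {α : Ordinal | ∃ i, ∃ hi : i < η, α = sSup (s i hi)})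
    (hcof : σ.cof = η.cof) (hsing : η.cof.ord < σ) :
    IsClosedSet ({α : Ordinal | ∃ i, ∃ hi : i < η, α ∈ s i hi} ∪ {σ}) ∧
      ∀ α ∈ ({α : Ordinal | ∃ i, ∃ hi : i < η, α ∈ s i hi} ∪ {σ} : Set Ordinal),
        ¬ RegularOrd α := by
  set S : Set Ordinal := {α : Ordinal | ∃ i, ∃ hi : i < η, α = sSup (s i hi)} with hS
  -- S is small, hence bounded above
  have hSeq : S = Set.range (fun p : Set.Iio η => sSup (s p.1 p.2)) := by
    ext x
    constructor
    · rintro ⟨i, hi, rfl⟩; exact ⟨⟨i, hi⟩, rfl⟩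
    · rintro ⟨⟨i, hi⟩, rfl⟩; exact ⟨i, hi, rfl⟩
  have hSbdd : BddAbove S := by
    rw [Ordinal.bddAbove_iff_small, hSeq]
    exact small_range _
  have hSne : S.Nonempty := ⟨sSup (s 0 hη.pos), 0, hη.pos, rfl⟩
  have hsup_le : ∀ i (hi : i < η), sSup (s i hi) ≤ σ := by
    intro i hi
    rw [hσ]
    exact le_csSup hSbdd ⟨i, hi, rfl⟩
  have hmem_le : ∀ i (hi : i < η), ∀ x ∈ s i hi, x ≤ σ := fun i hi x hx =>
    (le_csSup (hbdd i hi) hx).trans (hsup_le i hi)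
  set U : Set Ordinal := {α : Ordinal | ∃ i, ∃ hi : i < η, α ∈ s i hi} with hU
  have hT_le : sSup (U ∪ {σ}) ≤ σ := by
    apply csSup_le ⟨σ, Or.inr rfl⟩
    rintro x (⟨i, hi, hx⟩ | rfl)
    · exact hmem_le i hi x hx
    · exact le_rfl
  constructor
  · -- closedness
    intro α hα0 hαlt hlim
    have hασ : α < σ := lt_of_lt_of_le hαlt hT_le
    -- find i with α < sSup (s i hi)
    have : ∃ b ∈ S, α < b := by
      apply exists_lt_of_lt_csSup hSne
      rwa [← hσ]
    obtain ⟨b, ⟨i, hi, rfl⟩, hαb⟩ := this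
    have hne : (s i hi).Nonempty := by
      by_contra h
      rw [Set.not_nonempty_iff_eq_empty] at h
      rw [h, csSup_empty] at hαb
      exact absurd (le_bot_iff.mp hαb.le) hα0
    left
    refine ⟨i, hi, hclosed i hi α hα0 hαb ?_⟩
    intro β hβ
    obtain ⟨γ, hγT, hβγ, hγα⟩ := hlim β hβ
    rcases hγT with ⟨k, hk, hγk⟩ | hγσ
    · -- γ ∈ s k; show γ ∈ s i
      refine ⟨γ, ?_, hβγ, hγα⟩
      rcases le_or_gt k i with hki | hik
      · exact (hchain k i hk hi hki).1 hγk
      · by_contra hγi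
        have := (hchain i k hi hk hik.le).2 γ hγk hγi
        have hle : sSup (s i hi) ≤ γ := csSup_le hne fun x hx => (this x hx).le
        exact absurd (hle.trans_lt (hγα.trans hαb)) (lt_irrefl _)
    · exact absurd (hγσ ▸ (hγα.trans hασ)) (lt_irrefl _)
  · -- avoidance
    rintro α (⟨i, hi, hα⟩ | hασ)
    · exact havoid i hi α hα
    · rintro ⟨κ, hreg, hord⟩
      have hασ' : α = σ := hασ
      have h1 : σ.cof = κ := by
        rw [← hασ', ← hord]; exact hreg.cof_eq
      have h2 : η.cof.ord = σ := by
        rw [← hcof, h1, hord, hασ']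
      exact absurd (h2 ▸ hsing) (lt_irrefl _)
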